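/- arXiv:1508.05540 — 6 statements merged into one kernel-verified Lean document; each statement's English description precedes it below -/
import Mathlib

section
/- Let K be a field of characteristic p > 0 and G a finite p-group. Then every nonzero left ideal of the group ring K[G] contains the element ∑_{σ∈G} σ. -/
/-!
Pick `x ≠ 0` in the ideal. In characteristic `p` the `𝔽_p`-span of the orbit `G • x` is a
nonzero finite `𝔽_p`-vector space, hence of order a positive power of `p`, and it is `G`-stable.
The number of fixed points of a `p`-group acting on a finite set is congruent to its cardinality
mod `p`; as `0` is fixed, so is some `y ≠ 0` of the span. A `G`-fixed element of `K[G]`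
has constant coefficients, so `y = c • ∑ σ` with `c ≠ 0`, and `∑ σ = c⁻¹ • y` lies in the ideal.
-/

open MonoidAlgebra

theorem IsPGroup.exists_ne_zero_forall_apply_eq {p : ℕ} [Fact p.Prime] {G V : Type*} [Group G]
    (hG : IsPGroup p G) [AddCommGroup V] [Module (ZMod p) V] [Finite V] [Nontrivial V]
    (ρ : Representation (ZMod p) G V) : ∃ v ≠ 0, ∀ g, ρ g v = v := by
  let _ := MulAction.compHom V ρ
  have hcard : p ∣ Nat.card V := by
    rw [Module.natCard_eq_pow_finrank (K := ZMod p), Nat.card_zmod]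
    exact dvd_pow_self p Module.finrank_pos.ne'
  obtain ⟨v, hv, hv0⟩ :=
    hG.exists_fixed_point_of_prime_dvd_card_of_fixed_point V hcard (a := 0) fun g => map_zero (ρ g)
  exact ⟨v, hv0.symm, hv⟩

theorem MonoidAlgebra.eq_single_coeff_one_mul_sum_of_forall_of_mul_eq {k G : Type*} [Semiring k]
    [Group G] [Fintype G] {y : k[G]} (hy : ∀ g, of k G g * y = y) :
    y = single 1 (y.coeff 1) * ∑ σ : G, of k G σ := by
  ext a
  have hcoeff : y.coeff a = y.coeff 1 := by
    simpa using (congrArg (fun z : k[G] => z.coeff a) (hy a)).symm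
  rw [coeff_single_one_mul, coeff_sum, Finset.sum_apply']
  simp [of_apply, coeff_single, hcoeff]

theorem Ideal.exists_mem_ne_zero_forall_mul_eq {p : ℕ} [Fact p.Prime] {A G : Type*} [Ring A]
    [CharP A p] [Group G] [Finite G] (hG : IsPGroup p G) (ρ : G →* A) {I : Ideal A} (hI : I ≠ ⊥) :
    ∃ y ∈ I, y ≠ 0 ∧ ∀ g, ρ g * y = y := by
  let _ := ZMod.algebra A p
  obtain ⟨x, hxI, hx0⟩ := Submodule.exists_mem_ne_zero_of_ne_bot hI
  let σ : Representation (ZMod p) G A := (Algebra.lmul (ZMod p) A).toMonoidHom.comp ρ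
  let W : Subrepresentation σ :=
    { toSubmodule := Submodule.span (ZMod p) (Set.range fun g => ρ g * x)
      apply_mem_toSubmodule := fun g v hv => by
        refine Submodule.mem_comap.mp (Submodule.span_le.mpr ?_ hv)
        rintro _ ⟨h, rfl⟩
        exact Submodule.subset_span ⟨g * h, by simp [σ, mul_assoc]⟩ }
  have hWI : W.toSubmodule ≤ I.restrictScalars (ZMod p) := by
    rw [Submodule.span_le]
    rintro _ ⟨g, rfl⟩
    exact I.mul_mem_left _ hxI
  have hxW : x ∈ W.toSubmodule := Submodule.subset_span ⟨1, by simp⟩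
  have : Module.Finite (ZMod p) W.toSubmodule :=
    Module.Finite.span_of_finite _ (Set.finite_range _)
  have : Finite W.toSubmodule := Module.finite_of_finite (ZMod p)
  have : Nontrivial W.toSubmodule := ⟨⟨⟨x, hxW⟩, 0, by simpa using hx0⟩⟩
  obtain ⟨⟨y, hyW⟩, hy0, hy⟩ := hG.exists_ne_zero_forall_apply_eq W.toRepresentation
  exact ⟨y, hWI hyW, by simpa using hy0, fun g => congrArg Subtype.val (hy g)⟩

/-- Let K be a field of characteristic p > 0 and G a finite p-group.
Then every nonzero left ideal of the group ring K[G] contains ∑_{σ∈G} σ. -/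
theorem stmt_0 (K : Type*) [Field K] (p : ℕ) [Fact p.Prime] [CharP K p]
    (G : Type*) [Group G] [Fintype G] (hG : IsPGroup p G)
    (I : Ideal (MonoidAlgebra K G)) (hI : I ≠ ⊥) :
    (∑ σ : G, MonoidAlgebra.of K G σ) ∈ I := by
  have : CharP K[G] p := charP_of_injective_ringHom singleOneRingHom.injective p
  obtain ⟨y, hyI, hy0, hy⟩ := Ideal.exists_mem_ne_zero_forall_mul_eq hG (of K G) hI
  obtain ⟨c, hy_eq⟩ : ∃ c, y = single 1 c * ∑ σ : G, of K G σ :=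
    ⟨_, eq_single_coeff_one_mul_sum_of_forall_of_mul_eq hy⟩
  have hc : c ≠ 0 := fun hc => hy0 (by rw [hy_eq, hc, single_zero, zero_mul])
  have hsum : ∑ σ : G, of K G σ = single 1 c⁻¹ * y := by
    rw [hy_eq, ← mul_assoc, single_mul_single, one_mul, inv_mul_cancel₀ hc, ← one_def, one_mul]
  rw [hsum]
  exact I.mul_mem_left _ hyI
end

section
/- Let K be a field of characteristic p > 0, G a finite p-group, and M a K[G]-module generated by a single element m on which the norm element N = ∑_{σ∈G} σ acts nontrivially (N·m ≠ 0). Then M is a free K[G]-module of rank 1. -/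
/-!
Every nonzero left ideal `I` of `K[G]` contains the norm element `N`. Take `0 ≠ x ∈ I`: the
`𝔽_p`-span of the orbit `G • x` is a finite elementary abelian `p`-group, stable under `G`,
of order divisible by `p`. Since `0` is a fixed point, counting fixed points of the `p`-group
`G` modulo `p` yields a fixed `y ≠ 0` in it, hence in `I`. A left-`G`-invariant element of
`K[G]` has constant coefficients, so `y` is a nonzero multiple of `N` and `N ∈ I`.
Applied to the kernel of `a ↦ a • m`, which misses `N`, this shows that `a ↦ a • m` is
injective; it is surjective because `m` generates `M`.
-/

open MonoidAlgebra

namespace IsPGroup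

variable {p : ℕ} [Fact p.Prime] {G V : Type*} [Group G] [AddCommGroup V] [Module (ZMod p) V]
  [DistribMulAction G V]

theorem smul_mem_span_orbit (g : G) {x v : V}
    (hv : v ∈ Submodule.span (ZMod p) (Set.range (· • x : G → V))) :
    g • v ∈ Submodule.span (ZMod p) (Set.range (· • x : G → V)) := by
  let f := (DistribSMul.toAddMonoidHom V g).toZModLinearMap p
  have hmap : (Submodule.span (ZMod p) (Set.range (· • x : G → V))).map f ≤
      Submodule.span (ZMod p) (Set.range (· • x : G → V)) := by
    rw [Submodule.map_span, Submodule.span_le]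
    rintro _ ⟨_, ⟨h, rfl⟩, rfl⟩
    exact Submodule.subset_span ⟨g * h, mul_smul g h x⟩
  exact hmap (Submodule.mem_map_of_mem hv)

theorem exists_fixed_ne_zero_mem_span_orbit [Finite G] (hG : IsPGroup p G) {x : V} (hx : x ≠ 0) :
    ∃ y ∈ Submodule.span (ZMod p) (Set.range (· • x : G → V)), y ≠ 0 ∧ ∀ g : G, g • y = y := by
  set W := Submodule.span (ZMod p) (Set.range (· • x : G → V))
  let S : SubMulAction G V := ⟨W, fun g _ hv => smul_mem_span_orbit g hv⟩
  have : Module.Finite (ZMod p) W := .span_of_finite _ (Set.finite_range _)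
  have : Finite W := Module.finite_of_finite (ZMod p)
  have hxW : x ∈ W := Submodule.subset_span ⟨1, one_smul G x⟩
  have hcard : p ∣ Nat.card S := by
    have hp : p • (⟨x, hxW⟩ : W) = 0 := by
      rw [← Nat.cast_smul_eq_nsmul (ZMod p), ZMod.natCast_self, zero_smul]
    have := addOrderOf_dvd_natCard (⟨x, hxW⟩ : W)
    rwa [addOrderOf_eq_prime hp (by simpa using hx)] at this
  obtain ⟨⟨y, hyW⟩, hyfix, hy0⟩ := hG.exists_fixed_point_of_prime_dvd_card_of_fixed_point S hcard
    (a := ⟨0, W.zero_mem⟩) (fun g => Subtype.ext (smul_zero g))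
  exact ⟨y, hyW, fun h => hy0 (Subtype.ext h.symm), fun g => congrArg Subtype.val (hyfix g)⟩

end IsPGroup

namespace MonoidAlgebra

variable {k G : Type*} [Group G] [Fintype G]

theorem eq_coeff_one_smul_sum_of [Semiring k] {y : MonoidAlgebra k G}
    (hy : ∀ g : G, of k G g * y = y) : y = y.coeff 1 • ∑ g : G, of k G g := by
  classical
  ext h
  have hyh : (of k G h * y).coeff h = y.coeff h := by rw [hy h]
  rw [of_apply, coeff_single_mul_apply, inv_mul_cancel, one_mul] at hyh
  simp [coeff_sum, of_apply, hyh]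

theorem sum_of_mem_of_ne_bot {p : ℕ} [Fact p.Prime] [DivisionRing k] [CharP k p]
    (hG : IsPGroup p G) {I : Submodule (MonoidAlgebra k G) (MonoidAlgebra k G)} (hI : I ≠ ⊥) :
    ∑ g : G, of k G g ∈ I := by
  obtain ⟨x, hxI, hx0⟩ := Submodule.exists_mem_ne_zero_of_ne_bot hI
  let : Module (ZMod p) (MonoidAlgebra k G) := AddCommGroup.zmodModule fun a => by
    rw [← Nat.cast_smul_eq_nsmul k, CharP.cast_eq_zero, zero_smul]
  let : DistribMulAction G (MonoidAlgebra k G) := .compHom _ (of k G)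
  obtain ⟨y, hy, hy0, hyfix⟩ := hG.exists_fixed_ne_zero_mem_span_orbit hx0
  have hyI : y ∈ I := by
    refine (Submodule.span_le (p := AddSubgroup.toZModSubmodule p I.toAddSubgroup)).2 ?_ hy
    rintro _ ⟨g, rfl⟩
    exact I.smul_mem (of k G g) hxI
  have hyN := eq_coeff_one_smul_sum_of hyfix
  have hc : y.coeff 1 ≠ 0 := fun h => hy0 (by rw [hyN, h, zero_smul])
  have hNy : ∑ g : G, of k G g = (y.coeff 1)⁻¹ • y := by
    rw [← one_smul k (∑ g : G, of k G g), ← inv_mul_cancel₀ hc, mul_smul, ← hyN]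
  exact hNy ▸ I.smul_of_tower_mem _ hyI

end MonoidAlgebra

/-- Let K be a field of characteristic p > 0, G a finite p-group, and M a
K[G]-module generated by one element m on which the norm element N = ∑_{σ∈G} σ acts
nontrivially. Then M is a free K[G]-module of rank 1, i.e. M ≅ K[G]. -/
theorem stmt_2 (K : Type*) [Field K] (p : ℕ) [Fact p.Prime] [CharP K p]
    (G : Type*) [Group G] [Fintype G] (hG : IsPGroup p G)
    (M : Type*) [AddCommGroup M] [Module (MonoidAlgebra K G) M]
    (m : M) (hgen : Submodule.span (MonoidAlgebra K G) {m} = ⊤)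
    (hN : (∑ σ : G, MonoidAlgebra.of K G σ) • m ≠ 0) :
    Nonempty (M ≃ₗ[MonoidAlgebra K G] MonoidAlgebra K G) := by
  let φ := LinearMap.toSpanSingleton (MonoidAlgebra K G) M m
  have hsurj : Function.Surjective φ := by
    rw [← LinearMap.range_eq_top, ← LinearMap.span_singleton_eq_range, hgen]
  have hinj : Function.Injective φ := by
    rw [← LinearMap.ker_eq_bot]
    by_contra hker
    exact hN (sum_of_mem_of_ne_bot hG hker)
  exact ⟨(LinearEquiv.ofBijective φ ⟨hinj, hsurj⟩).symm⟩
end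

section
/- Let F be a field of characteristic not 2 and a, b ∈ F× with [a], [b] linearly independent in F×/(F×)². If δ ∈ F(√a) satisfies Nm_{F(√a)/F}(δ) ≡ b mod (F×)², then there exists δ₂ ∈ F(√b) with Nm_{F(√b)/F}(δ₂) ≡ a mod (F×)² and δ/δ₂ a square in E = F(√a, √b). -/
/-!
The element `z = x + y√a + d√b` of `E` satisfies `z² (x - d√b) = 2ay² (x + y√a)` once
`x² - ay² = bd²`, so `δ₂ = (x - d√b) / (2ay²)` works: its norm is
`(x² - bd²) / (2ay²)² = a (1 / 2ay)²`. Here `y ≠ 0`, since otherwise `b = (x/d)²`.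
-/

theorem ne_zero_of_sq_sub_mul_sq_eq_mul_sq {K : Type*} [Field K] {a b x y d : K}
    (hbsq : ∀ u : K, b ≠ u ^ 2) (hd : d ≠ 0) (h : x ^ 2 - a * y ^ 2 = b * d ^ 2) : y ≠ 0 := by
  rintro rfl
  apply hbsq (x / d)
  field_simp
  linear_combination -h

theorem div_sq_sub_mul_div_sq_eq {K : Type*} [Field K] {a b x y d : K}
    (h2ay : 2 * a * y ≠ 0) (h : x ^ 2 - a * y ^ 2 = b * d ^ 2) :
    (x / (2 * a * y ^ 2)) ^ 2 - b * (-d / (2 * a * y ^ 2)) ^ 2 = a * (1 / (2 * a * y)) ^ 2 := by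
  have ha : a ≠ 0 := right_ne_zero_of_mul (left_ne_zero_of_mul h2ay)
  have hy : y ≠ 0 := right_ne_zero_of_mul h2ay
  have h2 : (2 : K) ≠ 0 := left_ne_zero_of_mul (left_ne_zero_of_mul h2ay)
  field_simp
  linear_combination h

theorem sq_add_add_mul_sub_eq {R : Type*} [CommRing R] {a b x y d sa sb : R}
    (hsa : sa ^ 2 = a) (hsb : sb ^ 2 = b) (h : x ^ 2 - a * y ^ 2 = b * d ^ 2) :
    (x + y * sa + d * sb) ^ 2 * (x - d * sb) = 2 * a * y ^ 2 * (x + y * sa) := by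
  linear_combination (x * y ^ 2 - y ^ 2 * d * sb) * hsa
    + (-(x * d ^ 2) - d ^ 3 * sb - 2 * y * d ^ 2 * sa) * hsb
    + (x + 2 * y * sa + d * sb) * h

theorem add_mul_eq_sq_mul_add_mul {K : Type*} [Field K] {a b x y d sa sb : K}
    (hsa : sa ^ 2 = a) (hsb : sb ^ 2 = b) (hc : 2 * a * y ^ 2 ≠ 0)
    (h : x ^ 2 - a * y ^ 2 = b * d ^ 2) :
    x + y * sa = (x + y * sa + d * sb) ^ 2 * (x / (2 * a * y ^ 2) + -d / (2 * a * y ^ 2) * sb) := by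
  rw [show x / (2 * a * y ^ 2) + -d / (2 * a * y ^ 2) * sb = (x - d * sb) / (2 * a * y ^ 2) by ring,
    ← mul_div_assoc, eq_div_iff hc, sq_add_add_mul_sub_eq hsa hsb h, mul_comm]

theorem stmt_4_general (F E : Type*) [Field F] [Field E] [Algebra F E]
    (hchar : ringChar F ≠ 2) (a b : F) (ha : a ≠ 0)
    (hind : ∀ u : F, a ≠ u ^ 2 ∧ b ≠ u ^ 2 ∧ a * b ≠ u ^ 2)
    (sa sb : E) (hsa : sa ^ 2 = algebraMap F E a) (hsb : sb ^ 2 = algebraMap F E b)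
    (x y d : F) (hd : d ≠ 0) (hNm : x ^ 2 - a * y ^ 2 = b * d ^ 2) :
    ∃ (u v e : F) (z : E), e ≠ 0 ∧ u ^ 2 - b * v ^ 2 = a * e ^ 2 ∧
      algebraMap F E x + algebraMap F E y * sa =
        z ^ 2 * (algebraMap F E u + algebraMap F E v * sb) := by
  have hy : y ≠ 0 := ne_zero_of_sq_sub_mul_sq_eq_mul_sq (fun u => (hind u).2.1) hd hNm
  have h2ay : 2 * a * y ≠ 0 := mul_ne_zero (mul_ne_zero (Ring.two_ne_zero hchar) ha) hy
  have hc : 2 * a * y ^ 2 ≠ 0 := by rw [sq, ← mul_assoc]; exact mul_ne_zero h2ay hy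
  refine ⟨x / (2 * a * y ^ 2), -d / (2 * a * y ^ 2), 1 / (2 * a * y),
    algebraMap F E x + algebraMap F E y * sa + algebraMap F E d * sb,
    one_div_ne_zero h2ay, div_sq_sub_mul_div_sq_eq h2ay hNm, ?_⟩
  have hNmE := congrArg (algebraMap F E) hNm
  have hcE := (map_ne_zero (algebraMap F E)).mpr hc
  simp only [map_sub, map_mul, map_pow, map_ofNat] at hNmE hcE
  simp only [map_div₀, map_neg, map_mul, map_pow, map_ofNat]
  exact add_mul_eq_sq_mul_add_mul hsa hsb hcE hNmE

/-- char F ≠ 2, [a],[b] independent in F×/(F×)².  If δ = x + y√a ∈ F(√a)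
satisfies Nm_{F(√a)/F}(δ) = x² - ay² ≡ b mod (F×)², then there is δ₂ = u + v√b ∈ F(√b)
with Nm_{F(√b)/F}(δ₂) = u² - bv² ≡ a mod (F×)² and δ/δ₂ a square in E = F(√a,√b). -/
theorem stmt_4 (F E : Type*) [Field F] [Field E] [Algebra F E]
    (hchar : ringChar F ≠ 2) (a b : F) (ha : a ≠ 0) (hb : b ≠ 0)
    (hind : ∀ u : F, a ≠ u ^ 2 ∧ b ≠ u ^ 2 ∧ a * b ≠ u ^ 2)
    (sa sb : E) (hsa : sa ^ 2 = algebraMap F E a) (hsb : sb ^ 2 = algebraMap F E b)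
    (hE : Algebra.adjoin F {sa, sb} = ⊤)
    (x y d : F) (hd : d ≠ 0) (hNm : x ^ 2 - a * y ^ 2 = b * d ^ 2) :
    ∃ (u v e : F) (z : E), e ≠ 0 ∧ u ^ 2 - b * v ^ 2 = a * e ^ 2 ∧
      algebraMap F E x + algebraMap F E y * sa =
        z ^ 2 * (algebraMap F E u + algebraMap F E v * sb) :=
  stmt_4_general F E hchar a b ha hind sa sb hsa hsb x y d hd hNm
end

section
/- Let F be a field of characteristic 2 and a, b ∈ F such that [a], [b] are linearly independent in F/℘(F), where ℘(x) = x² - x. Let θ_a, θ_b be roots of ℘(X) = a and ℘(X) = b respectively, and E = F(θ_a, θ_b). If δ₁ = x + yθ_a ∈ F(θ_a) with x, y ∈ F and y = b + ℘(d) for some d ∈ F, then δ₂ := x + aθ_b + ab + ad² ∈ F(θ_b) satisfies δ₁ - δ₂ ∈ ℘(E) and Tr_{F(θ_b)/F}(δ₂) ≡ a mod ℘(F). -/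
/-!
With `θ_a² = θ_a + a` and `θ_b² = θ_b + b`, squaring is additive in characteristic 2, so
`z = θ_a θ_b + d θ_a` has `z² - z = (θ_a + a)(θ_b + b) + d²(θ_a + a) - θ_a θ_b - d θ_a`,
which is `δ₁ - δ₂`. For the trace, `[b] ≠ 0` makes `X² - X - b` the minimal polynomial of
`θ_b`, so `θ_b` generates the quadratic extension and has trace `1`, while every element `c`
of `F` has trace `2c = 0`.
-/

open Polynomial IntermediateField Module

theorem CharTwo.sq_sub_self_mul_add_mul {R : Type*} [CommRing R] [CharP R 2] {α β a b : R}
    (hα : α ^ 2 - α = a) (hβ : β ^ 2 - β = b) (d : R) :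
    (α * β + d * α) ^ 2 - (α * β + d * α) =
      (b + (d ^ 2 - d)) * α - (a * β + a * b + a * d ^ 2) := by
  linear_combination (β ^ 2 + d ^ 2) * hα + (α + a) * hβ +
    (d * α ^ 2 * β + a * β + a * b + a * d ^ 2) * (CharTwo.two_eq_zero : (2 : R) = 0)

section ArtinSchreier

variable {F K : Type*} [Field F] [Field K] [Algebra F K]

theorem natDegree_X_sq_sub_X_sub_C (b : F) : (X ^ 2 - X - C b : F[X]).natDegree = 2 := by
  compute_degree!

theorem irreducible_X_sq_sub_X_sub_C {b : F} (hb : ∀ u : F, b ≠ u ^ 2 - u) :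
    Irreducible (X ^ 2 - X - C b) := by
  have hdeg := natDegree_X_sq_sub_X_sub_C b
  rw [irreducible_iff_roots_eq_zero_of_degree_le_three (by omega) (by omega),
    Multiset.eq_zero_iff_forall_notMem]
  intro u hu
  have hroot : u ^ 2 - u - b = 0 := by
    simpa using (mem_roots (ne_zero_of_natDegree_gt (n := 0) (by omega))).mp hu
  exact hb u (by linear_combination -hroot)

theorem minpoly_eq_X_sq_sub_X_sub_C {b : F} (hb : ∀ u : F, b ≠ u ^ 2 - u) {θ : K}
    (hθ : θ ^ 2 - θ = algebraMap F K b) : minpoly F θ = X ^ 2 - X - C b := by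
  refine (minpoly.eq_of_irreducible_of_monic (irreducible_X_sq_sub_X_sub_C hb) ?_ ?_).symm
  · simp [hθ]
  · rw [sub_sub]
    exact monic_X_pow_sub (by rw [degree_X_add_C]; exact_mod_cast one_lt_two)

theorem trace_eq_one_of_sq_sub_self_eq (hK : finrank F K = 2) {b : F}
    (hb : ∀ u : F, b ≠ u ^ 2 - u) {θ : K} (hθ : θ ^ 2 - θ = algebraMap F K b) :
    Algebra.trace F K θ = 1 := by
  have : FiniteDimensional F K := .of_finrank_pos (by omega)
  have hmin := minpoly_eq_X_sq_sub_X_sub_C hb hθ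
  have hdeg := natDegree_X_sq_sub_X_sub_C b
  have hadjoin_top : finrank F⟮θ⟯ K = 1 := by
    have htower := finrank_mul_finrank F F⟮θ⟯ K
    rw [adjoin.finrank (.of_finite F θ), hmin, hdeg, hK] at htower
    omega
  rw [trace_eq_finrank_mul_minpoly_nextCoeff, hadjoin_top, hmin,
    nextCoeff_of_natDegree_pos (by omega), hdeg]
  simp [coeff_X]

end ArtinSchreier

theorem stmt_5_general (F K E : Type*) [Field F] [Field K] [Field E]
    [Algebra F K] [Algebra K E] [Algebra F E] [IsScalarTower F K E]
    (hchar : ringChar F = 2) (a b : F)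
    (hind : ∀ u : F, a ≠ u ^ 2 - u ∧ b ≠ u ^ 2 - u ∧ a + b ≠ u ^ 2 - u)
    (θa : E) (hθa : θa ^ 2 - θa = algebraMap F E a)
    (θb : K) (hθb : θb ^ 2 - θb = algebraMap F K b)
    (hK2 : Module.finrank F K = 2)
    (x y d : F) (hy : y = b + (d ^ 2 - d)) :
    (∃ z : E,
        (algebraMap F E x + algebraMap F E y * θa) -
          algebraMap K E (algebraMap F K x + algebraMap F K a * θb +
            algebraMap F K (a * b) + algebraMap F K (a * d ^ 2)) = z ^ 2 - z) ∧
      ∃ f : F,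
        Algebra.trace F K (algebraMap F K x + algebraMap F K a * θb +
          algebraMap F K (a * b) + algebraMap F K (a * d ^ 2)) = a + (f ^ 2 - f) := by
  have : CharP F 2 := hchar ▸ ringChar.charP F
  have : CharP E 2 := (Algebra.charP_iff F E 2).mp this
  constructor
  · have hθb' : algebraMap K E θb ^ 2 - algebraMap K E θb = algebraMap F E b := by
      rw [← map_pow, ← map_sub, hθb, ← IsScalarTower.algebraMap_apply]
    refine ⟨θa * algebraMap K E θb + algebraMap F E d * θa, ?_⟩
    rw [CharTwo.sq_sub_self_mul_add_mul hθa hθb', hy]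
    simp only [map_add, map_mul, map_pow, map_sub, ← IsScalarTower.algebraMap_apply]
    ring
  · refine ⟨0, ?_⟩
    rw [map_add, map_add, map_add, ← Algebra.smul_def, map_smul,
      trace_eq_one_of_sq_sub_self_eq hK2 (fun u ↦ (hind u).2.1) hθb,
      Algebra.trace_algebraMap, Algebra.trace_algebraMap, Algebra.trace_algebraMap, hK2]
    simp [CharTwo.two_eq_zero]

/-- char F = 2, [a],[b] independent in F/℘(F) (℘(x) = x² - x); θ_a ∈ E,
θ_b ∈ K = F(θ_b) are Artin–Schreier roots, E = F(θ_a,θ_b).  If δ₁ = x + yθ_a with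
y = b + ℘(d), then δ₂ := x + aθ_b + ab + ad² ∈ K satisfies δ₁ - δ₂ ∈ ℘(E) and
Tr_{K/F}(δ₂) ≡ a mod ℘(F). -/
theorem stmt_5 (F K E : Type*) [Field F] [Field K] [Field E]
    [Algebra F K] [Algebra K E] [Algebra F E] [IsScalarTower F K E]
    (hchar : ringChar F = 2) (a b : F)
    (hind : ∀ u : F, a ≠ u ^ 2 - u ∧ b ≠ u ^ 2 - u ∧ a + b ≠ u ^ 2 - u)
    (θa : E) (hθa : θa ^ 2 - θa = algebraMap F E a)
    (θb : K) (hθb : θb ^ 2 - θb = algebraMap F K b)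
    (hK : Algebra.adjoin F {θb} = ⊤) (hK2 : Module.finrank F K = 2)
    (hE : Algebra.adjoin F {θa, algebraMap K E θb} = ⊤)
    (x y d : F) (hy : y = b + (d ^ 2 - d)) :
    (∃ z : E,
        (algebraMap F E x + algebraMap F E y * θa) -
          algebraMap K E (algebraMap F K x + algebraMap F K a * θb +
            algebraMap F K (a * b) + algebraMap F K (a * d ^ 2)) = z ^ 2 - z) ∧
      ∃ f : F,
        Algebra.trace F K (algebraMap F K x + algebraMap F K a * θb +
          algebraMap F K (a * b) + algebraMap F K (a * d ^ 2)) = a + (f ^ 2 - f) :=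
  stmt_5_general F K E hchar a b hind θa hθa θb hθb hK2 x y d hy
end

section
/- Let F be a field of characteristic not 2, a, b ∈ F× with [a], [b] linearly independent in F×/(F×)², and let M = F(√a, √b). Suppose L/F is a Galois extension with L = M(√δ) for some δ ∈ F(√a) \ (M×)², and suppose Gal(L/F) contains a lift σ₁ of the automorphism of M fixing √b and negating √a. If Nm_{F(√a)/F}(δ) = b·a·f² for some f ∈ F×, then σ₁ has order 4 in Gal(L/F); in particular σ₁² ≠ 1. -/
/-!
Write `d = δ`, `d' = σ₁ δ` for its conjugate over `F` and `c = f √a √b`, so that `c² = d d'`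
is the norm hypothesis and `σ₁ c = -c`. Then `t = σ₁ √δ` satisfies `t² = d'`, hence
`(t d)² = c² d` and `t d = ε c √δ` with `ε = ±1`. Applying `σ₁` once more gives
`σ₁ t · d' = -ε c t`, and multiplying by `d`, `σ₁ t · d d' = -c² √δ = -d d' √δ`,
i.e. `σ₁² √δ = -√δ ≠ √δ`. Since `σ₁²` fixes `M`, `σ₁⁴` fixes `M` and `√δ`, hence `L`.
-/

theorem apply_apply_eq_neg_of_sq_eq_mul {R G : Type*} [CommRing R] [IsDomain R]
    [FunLike G R R] [RingHomClass G R R] (σ : G) {s d d' c : R}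
    (hs : s ^ 2 = d) (hd : σ d = d') (hc : σ c = -c) (hcd : c ^ 2 = d * d')
    (hdd : d * d' ≠ 0) : σ (σ s) = -s := by
  have hσs : (σ s) ^ 2 = d' := by rw [← map_pow, hs, hd]
  have hcancel : σ (σ s) * (d * d') = -s * (d * d') := by
    obtain h | h := sq_eq_sq_iff_eq_or_eq_neg.1
      (show (σ s * d) ^ 2 = (c * s) ^ 2 by linear_combination d ^ 2 * hσs - d * hcd - c ^ 2 * hs)
    · have hσ := congrArg σ h
      simp only [map_mul, hd, hc] at hσ
      linear_combination d * hσ - c * h - s * hcd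
    · have hσ := congrArg σ h
      simp only [map_mul, map_neg, hd, hc] at hσ
      linear_combination d * hσ + c * h - s * hcd
  exact mul_right_cancel₀ hdd hcancel

theorem AlgEquiv.apply_algebraMap_eq_of_adjoin_eq_top {F M L : Type*} [CommRing F]
    [CommRing M] [CommRing L] [Algebra F M] [Algebra M L] [Algebra F L] [IsScalarTower F M L]
    (τ : L ≃ₐ[F] L) {S : Set M} (hS : Algebra.adjoin F S = ⊤)
    (h : ∀ x ∈ S, τ (algebraMap M L x) = algebraMap M L x) (m : M) :
    τ (algebraMap M L m) = algebraMap M L m := by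
  have := AlgHom.ext_of_adjoin_eq_top hS
    (φ₁ := (τ : L →ₐ[F] L).comp (IsScalarTower.toAlgHom F M L))
    (φ₂ := IsScalarTower.toAlgHom F M L) h
  exact AlgHom.congr_fun this m

theorem AlgEquiv.eq_one_of_adjoin_eq_top {F M L : Type*} [CommRing F] [CommRing M] [CommRing L]
    [Algebra M L] [Algebra F L]
    (τ : L ≃ₐ[F] L) (hM : ∀ m : M, τ (algebraMap M L m) = algebraMap M L m)
    {S : Set L} (hS : Algebra.adjoin M S = ⊤) (h : ∀ x ∈ S, τ x = x) : τ = 1 := by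
  let τM : L ≃ₐ[M] L := AlgEquiv.ofRingEquiv (f := τ.toRingEquiv) hM
  have : (τM : L →ₐ[M] L) = AlgHom.id M L := AlgHom.ext_of_adjoin_eq_top hS h
  exact AlgEquiv.ext fun z => AlgHom.congr_fun this z

theorem mul_conj_eq_algebraMap_norm {F L : Type*} [CommRing F] [CommRing L] [Algebra F L]
    {a x y : F} {α : L} (hα : α ^ 2 = algebraMap F L a) :
    (algebraMap F L x + algebraMap F L y * α) * (algebraMap F L x - algebraMap F L y * α) =
      algebraMap F L (x ^ 2 - a * y ^ 2) := by
  simp only [map_sub, map_mul, map_pow]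
  linear_combination -(algebraMap F L y) ^ 2 * hα

theorem AlgEquiv.apply_apply_eq_neg_of_norm_eq {F L : Type*} [Field F] [Field L] [Algebra F L]
    (σ : L ≃ₐ[F] L) {a b x y f : F} {α β s : L}
    (hα : α ^ 2 = algebraMap F L a) (hβ : β ^ 2 = algebraMap F L b)
    (hσα : σ α = -α) (hσβ : σ β = β)
    (hs : s ^ 2 = algebraMap F L x + algebraMap F L y * α)
    (hNm : x ^ 2 - a * y ^ 2 = b * a * f ^ 2) (hN : b * a * f ^ 2 ≠ 0) :
    σ (σ s) = -s := by
  have hnorm := mul_conj_eq_algebraMap_norm (x := x) (y := y) hα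
  rw [hNm] at hnorm
  refine apply_apply_eq_neg_of_sq_eq_mul σ (d' := algebraMap F L x - algebraMap F L y * α)
    (c := algebraMap F L f * α * β) hs ?_ ?_ ?_ ?_
  · simp only [map_add, map_mul, AlgEquiv.commutes, hσα]
    ring
  · simp only [map_mul, AlgEquiv.commutes, hσα, hσβ]
    ring
  · rw [hnorm, map_mul, map_mul, map_pow]
    linear_combination (algebraMap F L f) ^ 2 * β ^ 2 * hα
      + (algebraMap F L f) ^ 2 * algebraMap F L a * hβ
  · rw [hnorm]
    exact (map_ne_zero _).2 hN

theorem AlgEquiv.orderOf_eq_four {F M L : Type*} [CommRing F] [CommRing M] [Field L]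
    [Algebra M L] [Algebra F L] (hchar : ringChar L ≠ 2)
    (τ : L ≃ₐ[F] L) (hM : ∀ m : M, (τ ^ 2) (algebraMap M L m) = algebraMap M L m)
    {s : L} (hL : Algebra.adjoin M {s} = ⊤) (hs : s ≠ 0) (hτ : τ (τ s) = -s) :
    orderOf τ = 4 := by
  have hτ2 : τ ^ 2 ≠ 1 := fun h => hs <| (Ring.eq_self_iff_eq_zero_of_char_ne_two hchar).1 <| by
    rw [← hτ, ← AlgEquiv.mul_apply, ← pow_two, h, AlgEquiv.one_apply]
  have hτ4 : τ ^ 4 = 1 := by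
    rw [show τ ^ 4 = τ ^ 2 * τ ^ 2 by group]
    refine AlgEquiv.eq_one_of_adjoin_eq_top _ (fun m => by simp [hM]) hL ?_
    rintro _ rfl
    simp [pow_two, hτ]
  exact orderOf_eq_prime_pow (p := 2) (n := 1) hτ2 hτ4

theorem stmt_7_general (F M L : Type*) [Field F] [Field M] [Field L]
    [Algebra F M] [Algebra M L] [Algebra F L] [IsScalarTower F M L]
    (hchar : ringChar F ≠ 2) (a b : F) (ha : a ≠ 0) (hb : b ≠ 0)
    (sa sb : M) (hsa : sa ^ 2 = algebraMap F M a) (hsb : sb ^ 2 = algebraMap F M b)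
    (hM : Algebra.adjoin F {sa, sb} = ⊤)
    (x y : F) (δ : M) (hδ : δ = algebraMap F M x + algebraMap F M y * sa)
    (sδ : L) (hsδ : sδ ^ 2 = algebraMap M L δ)
    (hL : Algebra.adjoin M {sδ} = ⊤)
    (σ₁ : L ≃ₐ[F] L)
    (hσa : σ₁ (algebraMap M L sa) = -algebraMap M L sa)
    (hσb : σ₁ (algebraMap M L sb) = algebraMap M L sb)
    (f : F) (hf : f ≠ 0) (hNm : x ^ 2 - a * y ^ 2 = b * a * f ^ 2) :
    orderOf σ₁ = 4 ∧ σ₁ ^ 2 ≠ 1 := by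
  have hA (r : F) : algebraMap M L (algebraMap F M r) = algebraMap F L r :=
    (IsScalarTower.algebraMap_apply F M L r).symm
  have hα : algebraMap M L sa ^ 2 = algebraMap F L a := by rw [← map_pow, hsa, hA]
  have hβ : algebraMap M L sb ^ 2 = algebraMap F L b := by rw [← map_pow, hsb, hA]
  replace hsδ : sδ ^ 2 = algebraMap F L x + algebraMap F L y * algebraMap M L sa := by
    rw [hsδ, hδ, map_add, map_mul, hA, hA]
  have hN : b * a * f ^ 2 ≠ 0 := by simp [ha, hb, hf]
  have hsδ0 : sδ ≠ 0 := by
    rintro rfl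
    apply hN
    apply (algebraMap F L).injective
    rw [← hNm, ← mul_conj_eq_algebraMap_norm hα, ← hsδ, map_zero]
    ring
  have hσ2M (m : M) : (σ₁ ^ 2) (algebraMap M L m) = algebraMap M L m := by
    refine AlgEquiv.apply_algebraMap_eq_of_adjoin_eq_top _ hM ?_ m
    rintro _ (rfl | rfl) <;> simp [pow_two, hσa, hσb]
  have hord := AlgEquiv.orderOf_eq_four (by rwa [← Algebra.ringChar_eq F L]) σ₁ hσ2M hL hsδ0
    (σ₁.apply_apply_eq_neg_of_norm_eq hα hβ hσa hσb hsδ hNm hN)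
  exact ⟨hord, pow_ne_one_of_lt_orderOf two_ne_zero (by omega)⟩

/-- char F ≠ 2, M = F(√a,√b), L = M(√δ) Galois over F with
δ = x + y√a ∈ F(√a) not a square in M, σ₁ ∈ Gal(L/F) a lift of the automorphism of M
negating √a and fixing √b.  If Nm_{F(√a)/F}(δ) = x² - ay² = b·a·f² for some f ∈ F×,
then σ₁ has order 4; in particular σ₁² ≠ 1. -/
theorem stmt_7 (F M L : Type*) [Field F] [Field M] [Field L]
    [Algebra F M] [Algebra M L] [Algebra F L] [IsScalarTower F M L]
    (hchar : ringChar F ≠ 2) (a b : F) (ha : a ≠ 0) (hb : b ≠ 0)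
    (hind : ∀ u : F, a ≠ u ^ 2 ∧ b ≠ u ^ 2 ∧ a * b ≠ u ^ 2)
    (sa sb : M) (hsa : sa ^ 2 = algebraMap F M a) (hsb : sb ^ 2 = algebraMap F M b)
    (hM : Algebra.adjoin F {sa, sb} = ⊤)
    (x y : F) (δ : M) (hδ : δ = algebraMap F M x + algebraMap F M y * sa)
    (hδns : ¬∃ m : M, δ = m ^ 2)
    (sδ : L) (hsδ : sδ ^ 2 = algebraMap M L δ)
    (hL : Algebra.adjoin M {sδ} = ⊤) [IsGalois F L]
    (σ₁ : L ≃ₐ[F] L)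
    (hσa : σ₁ (algebraMap M L sa) = -algebraMap M L sa)
    (hσb : σ₁ (algebraMap M L sb) = algebraMap M L sb)
    (f : F) (hf : f ≠ 0) (hNm : x ^ 2 - a * y ^ 2 = b * a * f ^ 2) :
    orderOf σ₁ = 4 ∧ σ₁ ^ 2 ≠ 1 :=
  stmt_7_general F M L hchar a b ha hb sa sb hsa hsb hM x y δ hδ sδ hsδ hL σ₁ hσa hσb f hf hNm
end

section
/- Let σ₁, σ₂, σ₃ ∈ U_4(𝔽₂) be the images of E_{12}, E_{23}, E_{34} under an automorphism of U_4(𝔽₂), and let σ₂′ be the image of E_{23} under another automorphism. Then σ₂′ ≡ σ₂ modulo the commutator subgroup Φ of U_4(𝔽₂). Equivalently: any automorphism of U_4(𝔽₂) fixes the image of E_{23} in the abelianization U_4(𝔽₂)/Φ. -/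
/-- The submonoid of upper unitriangular n×n matrices over ℤ/p. -/
def unipotentSubmonoid (p n : ℕ) [NeZero p] :
    Submonoid (Matrix (Fin n) (Fin n) (ZMod p))ˣ where
  carrier := {M | (∀ i j : Fin n, j < i → (M : Matrix (Fin n) (Fin n) (ZMod p)) i j = 0) ∧
      ∀ i : Fin n, (M : Matrix (Fin n) (Fin n) (ZMod p)) i i = 1}
  one_mem' := by
    refine ⟨fun i j h => ?_, fun i => ?_⟩
    · simp [Matrix.one_apply, h.ne']
    · simp [Matrix.one_apply]
  mul_mem' := by
    rintro A B ⟨hA, hA1⟩ ⟨hB, hB1⟩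
    refine ⟨fun i j h => ?_, fun i => ?_⟩
    · show (A.val * B.val) i j = 0
      rw [Matrix.mul_apply]
      refine Finset.sum_eq_zero fun k _ => ?_
      rcases lt_or_ge k i with hk | hk
      · rw [hA i k hk, zero_mul]
      · rw [hB k j (lt_of_lt_of_le h hk), mul_zero]
    · show (A.val * B.val) i i = 1
      rw [Matrix.mul_apply]
      rw [Finset.sum_eq_single i (fun k _ hk => ?_) (by simp)]
      · rw [hA1, hB1, one_mul]
      · rcases lt_or_gt_of_ne hk with hlt | hgt
        · rw [hA i k hlt, zero_mul]
        · rw [hB k i hgt, mul_zero]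

/-- `U p n`: the group of upper unitriangular n×n matrices over ℤ/p. -/
def U (p n : ℕ) [NeZero p] : Subgroup (Matrix (Fin n) (Fin n) (ZMod p))ˣ :=
  { unipotentSubmonoid p n with
    inv_mem' := by
      intro x hx
      have h1 : x ^ (orderOf x - 1) ∈ unipotentSubmonoid p n := pow_mem hx _
      have hpos : 0 < orderOf x := orderOf_pos x
      have h2 : x * x ^ (orderOf x - 1) = 1 := by
        rw [← pow_succ', Nat.sub_add_cancel hpos, pow_orderOf_eq_one]
      have : x⁻¹ = x ^ (orderOf x - 1) := inv_eq_of_mul_eq_one_right h2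
      show x⁻¹ ∈ unipotentSubmonoid p n
      rw [this]
      exact h1 }

/-- The elementary unipotent matrix E_{ij} = 1 + e_{ij} over 𝔽₂ (its own inverse). -/
def Emat (i j : Fin 4) : Matrix (Fin 4) (Fin 4) (ZMod 2) :=
  1 + Matrix.single i j 1

lemma mem_U_iff (x : (Matrix (Fin 4) (Fin 4) (ZMod 2))ˣ) :
    x ∈ U 2 4 ↔ ((∀ i j : Fin 4, j < i → (x : Matrix (Fin 4) (Fin 4) (ZMod 2)) i j = 0) ∧
      ∀ i : Fin 4, (x : Matrix (Fin 4) (Fin 4) (ZMod 2)) i i = 1) := Iff.rfl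

def E12 : U 2 4 := ⟨⟨Emat 0 1, Emat 0 1, by decide, by decide⟩, (mem_U_iff _).mpr (by simp [Emat, Matrix.one_apply, Matrix.single]; decide)⟩
def E23 : U 2 4 := ⟨⟨Emat 1 2, Emat 1 2, by decide, by decide⟩, (mem_U_iff _).mpr (by simp [Emat, Matrix.one_apply, Matrix.single]; decide)⟩
def E34 : U 2 4 := ⟨⟨Emat 2 3, Emat 2 3, by decide, by decide⟩, (mem_U_iff _).mpr (by simp [Emat, Matrix.one_apply, Matrix.single]; decide)⟩

/-!
The commutator subgroup `Φ` of `U₄(𝔽₂)` is exactly the set of matrices with zero superdiagonal: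
the superdiagonal entries are additive, and the three entries above it are realised by
`E₁₃ = ⁅E₁₂, E₂₃⁆`, `E₂₄ = ⁅E₂₃, E₃₄⁆` and `E₁₄ = ⁅E₁₂, E₂₄⁆`. Hence two elements agree in the
abelianization iff they have the same superdiagonal. Since `Φ` and its centralizer are
characteristic and `E₂₃` centralizes `Φ` without lying in it, `g = f E₂₃` centralizes `Φ` and
`g ∉ Φ`. Commuting with `E₁₃` forces `g₃₄ = 0`, commuting with `E₂₄` forces `g₁₂ = 0`, and then
`g ∉ Φ` forces `g₂₃ = 1`: the superdiagonal of `g` is that of `E₂₃`.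
(Indices are 1-based here and 0-based in the code.)
-/

open scoped commutatorElement

lemma Subgroup.Characteristic.map_mem_iff {G : Type*} [Group G] (H : Subgroup G)
    [hH : H.Characteristic] (φ : G ≃* G) {x : G} : φ x ∈ H ↔ x ∈ H :=
  SetLike.ext_iff.mp (hH.fixed φ) x

lemma Abelianization.of_eq_of_iff {G : Type*} [Group G] {x y : G} :
    Abelianization.of x = Abelianization.of y ↔ x⁻¹ * y ∈ commutator G :=
  QuotientGroup.eq

namespace Matrix

variable {n R : Type*} [Fintype n] [DecidableEq n] [NonAssocSemiring R]

lemma row_apply_eq_zero_of_commute_single {g : Matrix n n R} {i j : n}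
    (h : Commute g (single i j 1)) {b : n} (hb : b ≠ j) : g j b = 0 := by
  have := congr_fun (congr_fun h.eq i) b
  rwa [mul_single_apply_of_ne _ _ _ _ _ hb, single_mul_apply_same, one_mul, eq_comm] at this

lemma col_apply_eq_zero_of_commute_single {g : Matrix n n R} {i j : n}
    (h : Commute g (single i j 1)) {a : n} (ha : a ≠ i) : g a i = 0 := by
  have := congr_fun (congr_fun h.eq a) j
  rwa [mul_single_apply_same, single_mul_apply_of_ne _ _ _ _ _ ha, mul_one] at this

end Matrix

namespace U

variable {p n : ℕ} [NeZero p]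

instance : CoeOut (U p n) (Matrix (Fin n) (Fin n) (ZMod p)) :=
  ⟨fun x => ((x : (Matrix (Fin n) (Fin n) (ZMod p))ˣ) : Matrix (Fin n) (Fin n) (ZMod p))⟩

lemma apply_eq_zero_of_lt (x : U p n) {i j : Fin n} (h : j < i) :
    (x : Matrix (Fin n) (Fin n) (ZMod p)) i j = 0 :=
  x.2.1 i j h

lemma apply_self (x : U p n) (i : Fin n) : (x : Matrix (Fin n) (Fin n) (ZMod p)) i i = 1 :=
  x.2.2 i

lemma mul_apply_of_val_add_one (x y : U p n) {i j : Fin n} (hij : (i : ℕ) + 1 = j) :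
    ((x * y : U p n) : Matrix (Fin n) (Fin n) (ZMod p)) i j =
      (x : Matrix (Fin n) (Fin n) (ZMod p)) i j + (y : Matrix (Fin n) (Fin n) (ZMod p)) i j := by
  have hne : i ≠ j := fun h => by rw [h] at hij; omega
  rw [Subgroup.coe_mul, Units.val_mul, Matrix.mul_apply, Finset.sum_eq_add_of_mem i j
    (Finset.mem_univ _) (Finset.mem_univ _) hne, apply_self, apply_self, one_mul, mul_one, add_comm]
  intro k _ hk
  rcases lt_or_gt_of_ne hk.1 with hki | hik
  · rw [apply_eq_zero_of_lt x hki, zero_mul]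
  · have hjk : j < k := by
      have := Fin.val_ne_of_ne hk.2
      rw [Fin.lt_def] at hik ⊢
      omega
    rw [apply_eq_zero_of_lt y hjk, mul_zero]

def superdiagEntry (i j : Fin n) (hij : (i : ℕ) + 1 = j) : U p n →* Multiplicative (ZMod p) where
  toFun x := .ofAdd ((x : Matrix (Fin n) (Fin n) (ZMod p)) i j)
  map_one' := by
    have hne : i ≠ j := Fin.ne_of_val_ne (by omega)
    show Multiplicative.ofAdd ((1 : Matrix (Fin n) (Fin n) (ZMod p)) i j) = 1
    rw [Matrix.one_apply_ne hne, ofAdd_zero]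
  map_mul' x y := by rw [mul_apply_of_val_add_one x y hij]; rfl

lemma inv_mul_apply_of_val_add_one (x y : U p n) {i j : Fin n} (hij : (i : ℕ) + 1 = j) :
    ((x⁻¹ * y : U p n) : Matrix (Fin n) (Fin n) (ZMod p)) i j =
      (y : Matrix (Fin n) (Fin n) (ZMod p)) i j - (x : Matrix (Fin n) (Fin n) (ZMod p)) i j := by
  have := congr_arg Multiplicative.toAdd (map_mul (superdiagEntry i j hij) x⁻¹ y)
  rw [map_inv, toAdd_mul, toAdd_inv] at this
  rw [sub_eq_neg_add]
  exact this

lemma apply_eq_zero_of_mem_commutator {x : U p n} (hx : x ∈ commutator (U p n)) {i j : Fin n}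
    (hij : (i : ℕ) + 1 = j) : (x : Matrix (Fin n) (Fin n) (ZMod p)) i j = 0 :=
  ofAdd_eq_one.mp (MonoidHom.mem_ker.mp
    (Abelianization.commutator_subset_ker (superdiagEntry i j hij) hx))

end U

namespace U24

local notation "M₄" => Matrix (Fin 4) (Fin 4) (ZMod 2)

def centralMat (d e f : ZMod 2) : M₄ :=
  !![1, 0, d, f; 0, 1, 0, e; 0, 0, 1, 0; 0, 0, 0, 1]

lemma coe_eq_centralMat (x : U 2 4) (h01 : (x : M₄) 0 1 = 0) (h12 : (x : M₄) 1 2 = 0)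
    (h23 : (x : M₄) 2 3 = 0) :
    (x : M₄) = centralMat ((x : M₄) 0 2) ((x : M₄) 1 3) ((x : M₄) 0 3) := by
  ext i j
  fin_cases i <;> fin_cases j <;>
    first
      | exact U.apply_self x _
      | exact U.apply_eq_zero_of_lt x (by decide)
      | assumption
      | rfl

lemma exists_mem_commutator_coe_eq_centralMat (d e f : ZMod 2) :
    ∃ y ∈ commutator (U 2 4), (y : M₄) = centralMat d e f := by
  have hmem (a b : U 2 4) : ⁅a, b⁆ ∈ commutator (U 2 4) :=
    Subgroup.commutator_mem_commutator (Subgroup.mem_top a) (Subgroup.mem_top b)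
  refine ⟨⁅E12, E23⁆ ^ d.val * ⁅E23, E34⁆ ^ e.val * ⁅E12, ⁅E23, E34⁆⁆ ^ f.val,
    mul_mem (mul_mem (pow_mem (hmem _ _) _) (pow_mem (hmem _ _) _)) (pow_mem (hmem _ _) _), ?_⟩
  revert d e f
  decide

lemma mem_commutator_iff (x : U 2 4) :
    x ∈ commutator (U 2 4) ↔ (x : M₄) 0 1 = 0 ∧ (x : M₄) 1 2 = 0 ∧ (x : M₄) 2 3 = 0 := by
  refine ⟨fun hx => ⟨U.apply_eq_zero_of_mem_commutator hx rfl,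
    U.apply_eq_zero_of_mem_commutator hx rfl, U.apply_eq_zero_of_mem_commutator hx rfl⟩, ?_⟩
  rintro ⟨h01, h12, h23⟩
  obtain ⟨y, hy, hyx⟩ :=
    exists_mem_commutator_coe_eq_centralMat ((x : M₄) 0 2) ((x : M₄) 1 3) ((x : M₄) 0 3)
  rwa [Subtype.ext (Units.ext (hyx.trans (coe_eq_centralMat x h01 h12 h23).symm))] at hy

lemma of_eq_of_iff (x y : U 2 4) : Abelianization.of x = Abelianization.of y ↔
    (x : M₄) 0 1 = (y : M₄) 0 1 ∧ (x : M₄) 1 2 = (y : M₄) 1 2 ∧ (x : M₄) 2 3 = (y : M₄) 2 3 := by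
  rw [Abelianization.of_eq_of_iff, mem_commutator_iff,
    U.inv_mul_apply_of_val_add_one x y (i := 0) (j := 1) rfl,
    U.inv_mul_apply_of_val_add_one x y (i := 1) (j := 2) rfl,
    U.inv_mul_apply_of_val_add_one x y (i := 2) (j := 3) rfl]
  simp only [sub_eq_zero, eq_comm (a := (y : M₄) _ _)]

lemma E23_mem_centralizer_commutator : E23 ∈ Subgroup.centralizer (commutator (U 2 4)) := by
  intro y hy
  obtain ⟨h01, h12, h23⟩ := (mem_commutator_iff y).mp hy
  refine Subtype.ext (Units.ext ?_)
  show (y : M₄) * Emat 1 2 = Emat 1 2 * y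
  rw [coe_eq_centralMat y h01 h12 h23]
  generalize (y : M₄) 0 2 = d, (y : M₄) 1 3 = e, (y : M₄) 0 3 = f
  revert d e f
  decide

lemma E23_not_mem_commutator : E23 ∉ commutator (U 2 4) :=
  (mem_commutator_iff E23).not.mpr (by decide)

lemma commute_of_mem_centralizer_commutator {g : U 2 4}
    (hg : g ∈ Subgroup.centralizer (commutator (U 2 4))) (a b : U 2 4) :
    Commute (g : M₄) ((⁅a, b⁆ : U 2 4) : M₄) := by
  have := hg _ (Subgroup.commutator_mem_commutator (Subgroup.mem_top a) (Subgroup.mem_top b))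
  exact (congr_arg (fun z : U 2 4 => (z : M₄)) this).symm

lemma of_eq_of_E23_of_mem_centralizer {g : U 2 4}
    (hg : g ∈ Subgroup.centralizer (commutator (U 2 4))) (hg' : g ∉ commutator (U 2 4)) :
    Abelianization.of g = Abelianization.of E23 := by
  have hE13 : ((⁅E12, E23⁆ : U 2 4) : M₄) = 1 + Matrix.single 0 2 1 := by decide
  have hE24 : ((⁅E23, E34⁆ : U 2 4) : M₄) = 1 + Matrix.single 1 3 1 := by decide
  have c13 := commute_of_mem_centralizer_commutator hg E12 E23
  have c24 := commute_of_mem_centralizer_commutator hg E23 E34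
  rw [hE13] at c13
  rw [hE24] at c24
  have h23 : (g : M₄) 2 3 = 0 := Matrix.row_apply_eq_zero_of_commute_single
    (by simpa using c13.sub_right (Commute.one_right _)) (by decide)
  have h01 : (g : M₄) 0 1 = 0 := Matrix.col_apply_eq_zero_of_commute_single
    (by simpa using c24.sub_right (Commute.one_right _)) (by decide)
  have h12 : (g : M₄) 1 2 = 1 := by
    have h12 : (g : M₄) 1 2 ≠ 0 := fun h12 => hg' ((mem_commutator_iff g).mpr ⟨h01, h12, h23⟩)
    exact (show ∀ b : ZMod 2, b ≠ 0 → b = 1 by decide) _ h12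
  rw [of_eq_of_iff, h01, h12, h23]
  decide

end U24

/-- every automorphism of U₄(𝔽₂) fixes the image of E₂₃ in the
abelianization U₄(𝔽₂)/[U₄(𝔽₂),U₄(𝔽₂)]; i.e. if σ₂′ is the image of E₂₃ under any
automorphism, then σ₂′ ≡ E₂₃ modulo the commutator subgroup. -/
theorem stmt_19 (f : U 2 4 ≃* U 2 4) :
    Abelianization.of (f E23) = Abelianization.of E23 :=
  U24.of_eq_of_E23_of_mem_centralizer
    ((Subgroup.Characteristic.map_mem_iff _ f).mpr U24.E23_mem_centralizer_commutator)
    ((Subgroup.Characteristic.map_mem_iff _ f).not.mpr U24.E23_not_mem_commutator)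
end
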